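/- The de Jonquières involution of the dP_5 lattice, i.e. the ℤ-linear map I : ℤ^6 → ℤ^6 with I(l) = 3l − 2e_1 − e_2 − e_3 − e_4 − e_5, I(e_1) = 2l − e_1 − e_2 − e_3 − e_4 − e_5, and I(e_j) = l − e_1 − e_j for j = 2,…,5, satisfies: I ∘ I = id; I preserves the intersection form; I(K) = K; the sublattice of I-fixed vectors is exactly the rank-2 sublattice ℤK + ℤ(l − e_1) (and the eigenspace dimensions are (b_2^+, b_2^−) = (2, 4)); and for every (−1)-class v one has I(v) ≠ v and I(v)·v = 1. -/

import Mathlib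

/-!
In the basis `l, e₁, …, e₅`, `I` is the symmetric integer matrix `J = jonquieres` and the
intersection form has Gram matrix `G = diag(1, −1, …, −1)`, so `J² = 1`, `Jᵀ G J = G` and
`J K = K` are finite computations. The `+1`-eigenlattice is `ℤK + ℤF` with `F = l − e₁`; the
`−1`-eigenlattice is the `D₄` lattice with simple roots
`e₂ − e₃, e₃ − e₄, e₄ − e₅, l − e₁ − e₂ − e₃`.

For a `(−1)`-class `v` put `s = v·F`. Then `I(v)·v = 1 − 2s(s − 1)`, while Cauchy–Schwarz for
the coordinates of `v` along `e₂, …, e₅` gives `(2s − 1)² ≤ 5`, so `s ∈ {0, 1}`.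
-/

namespace Stmt6

/-- Intersection form of the dP₅ lattice `ℤ⁶` with basis `l, e₁, …, e₅`. -/
def dot (x y : Fin 6 → ℤ) : ℤ := x 0 * y 0 - ∑ i : Fin 5, x i.succ * y i.succ

/-- The canonical class `K = -3l + e₁ + ⋯ + e₅`. -/
def K : Fin 6 → ℤ := fun i => if i = 0 then -3 else 1

def l : Fin 6 → ℤ := Pi.single 0 1

/-- The exceptional class `e_{j+1}` (`j : Fin 5` zero-based); in particular `e 0 = e₁`. -/
def e (j : Fin 5) : Fin 6 → ℤ := Pi.single j.succ 1

open Matrix Module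

lemma finrank_eq_card_of_mem_iff {R M ι : Type*} [Ring R] [Nontrivial R] [StrongRankCondition R]
    [AddCommGroup M] [Module R M] [Fintype ι] (p : Submodule R M) {v : ι → M}
    (hv : LinearIndependent R v)
    (hp : ∀ x, x ∈ p ↔ ∃ c : ι → R, ∑ i, c i • v i = x) : finrank R p = Fintype.card ι := by
  obtain rfl : p = Submodule.span R (Set.range v) := by
    ext x
    rw [hp, Submodule.mem_span_range_iff_exists_fun]
  exact finrank_span_eq_card hv

def jonquieres : Matrix (Fin 6) (Fin 6) ℤ :=
  !![3, 2, 1, 1, 1, 1;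
    -2, -1, -1, -1, -1, -1;
    -1, -1, -1, 0, 0, 0;
    -1, -1, 0, -1, 0, 0;
    -1, -1, 0, 0, -1, 0;
    -1, -1, 0, 0, 0, -1]

def gram : Matrix (Fin 6) (Fin 6) ℤ := diagonal ![1, -1, -1, -1, -1, -1]

lemma dot_eq (x y : Fin 6 → ℤ) :
    dot x y = x 0 * y 0 - x 1 * y 1 - x 2 * y 2 - x 3 * y 3 - x 4 * y 4 - x 5 * y 5 := by
  simp [dot, Fin.sum_univ_five, sub_sub]

lemma dot_K (x : Fin 6 → ℤ) : dot x K = -3 * x 0 - x 1 - x 2 - x 3 - x 4 - x 5 := by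
  simp [dot_eq, K, mul_comm]

lemma dot_l_sub_e_zero (x : Fin 6 → ℤ) : dot x (l - e 0) = x 0 + x 1 := by
  simp [dot_eq, l, e]

lemma dot_eq_dotProduct_mulVec (x y : Fin 6 → ℤ) : dot x y = x ⬝ᵥ gram *ᵥ y := by
  simp [dot_eq, gram, dotProduct, mulVec_diagonal, Fin.sum_univ_succ, sub_eq_add_neg, add_assoc]

lemma dot_mulVec_mulVec {A : Matrix (Fin 6) (Fin 6) ℤ} (hA : Aᵀ * gram * A = gram)
    (x y : Fin 6 → ℤ) : dot (A *ᵥ x) (A *ᵥ y) = dot x y := calc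
  dot (A *ᵥ x) (A *ᵥ y) = (gram *ᵥ A *ᵥ y) ⬝ᵥ A *ᵥ x := by
    rw [dot_eq_dotProduct_mulVec, dotProduct_comm]
  _ = x ⬝ᵥ (Aᵀ * gram * A) *ᵥ y := by
    rw [dotProduct_mulVec, ← mulVec_transpose, dotProduct_comm, mulVec_mulVec, mulVec_mulVec,
      Matrix.mul_assoc]
  _ = dot x y := by rw [hA, dot_eq_dotProduct_mulVec]

lemma jonquieres_mul_self : jonquieres * jonquieres = 1 := by decide

lemma jonquieres_transpose_mul_gram_mul : jonquieresᵀ * gram * jonquieres = gram := by decide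

lemma jonquieres_mulVec_K : jonquieres *ᵥ K = K := by decide

lemma jonquieres_mulVec (x : Fin 6 → ℤ) : jonquieres *ᵥ x =
    ![3 * x 0 + 2 * x 1 + x 2 + x 3 + x 4 + x 5, -2 * x 0 - x 1 - x 2 - x 3 - x 4 - x 5,
      -x 0 - x 1 - x 2, -x 0 - x 1 - x 3, -x 0 - x 1 - x 4, -x 0 - x 1 - x 5] := by
  ext i
  fin_cases i <;> simp [jonquieres, mulVec, dotProduct, Fin.sum_univ_succ] <;> ring

lemma jonquieres_mulVec_eq_self_iff (x : Fin 6 → ℤ) :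
    jonquieres *ᵥ x = x ↔ ∃ a b : ℤ, x = a • K + b • (l - e 0) := by
  constructor
  · intro hx
    have hx := funext_iff.1 hx
    simp only [jonquieres_mulVec, Fin.forall_fin_succ, Fin.isValue, cons_val_zero, cons_val_succ,
      Fin.succ_zero_eq_one, Fin.succ_one_eq_two, Fin.reduceSucc, IsEmpty.forall_iff, and_true] at hx
    refine ⟨x 2, x 0 + 3 * x 2, ?_⟩
    ext i
    fin_cases i <;> simp [K, l, e] <;> omega
  · rintro ⟨a, b, rfl⟩
    ext i
    fin_cases i <;> simp [jonquieres_mulVec, K, l, e] <;> ring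

def antiInvariantBasis : Fin 4 → Fin 6 → ℤ :=
  ![e 1 - e 2, e 2 - e 3, e 3 - e 4, l - e 0 - e 1 - e 2]

lemma jonquieres_mulVec_eq_neg_iff (x : Fin 6 → ℤ) :
    jonquieres *ᵥ x = -x ↔ ∃ c : Fin 4 → ℤ, ∑ i, c i • antiInvariantBasis i = x := by
  constructor
  · intro hx
    have hx := funext_iff.1 hx
    simp only [jonquieres_mulVec, Fin.forall_fin_succ, Fin.isValue, Pi.neg_apply, cons_val_zero,
      cons_val_succ, Fin.succ_zero_eq_one, Fin.succ_one_eq_two, Fin.reduceSucc, IsEmpty.forall_iff,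
      and_true] at hx
    refine ⟨![x 0 + x 2, 2 * x 0 + x 2 + x 3, -x 5, x 0], ?_⟩
    ext i
    fin_cases i <;> simp [antiInvariantBasis, Fin.sum_univ_four, l, e] <;> omega
  · rintro ⟨c, rfl⟩
    ext i
    fin_cases i <;>
      simp [jonquieres_mulVec, antiInvariantBasis, Fin.sum_univ_four, l, e] <;> ring

lemma linearIndependent_antiInvariantBasis : LinearIndependent ℤ antiInvariantBasis := by
  refine Fintype.linearIndependent_iff.2 fun c hc => ?_
  have h0 : c 3 = 0 := by simpa [antiInvariantBasis, Fin.sum_univ_four, l, e] using congrFun hc 0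
  have h2 : c 0 = c 3 := by
    simpa [antiInvariantBasis, Fin.sum_univ_four, l, e, add_neg_eq_zero] using congrFun hc 2
  have h4 : c 1 = c 2 := by
    simpa [antiInvariantBasis, Fin.sum_univ_four, l, e, neg_add_eq_zero] using congrFun hc 4
  have h5 : c 2 = 0 := by simpa [antiInvariantBasis, Fin.sum_univ_four, l, e] using congrFun hc 5
  intro i
  fin_cases i <;> simp only [Fin.zero_eta, Fin.mk_one, Fin.reduceFinMk] <;> omega

lemma linearIndependent_K_l_sub_e_zero : LinearIndependent ℤ ![K, l - e 0] := by
  refine LinearIndependent.pair_iff.2 fun a b h => ?_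
  have h0 : a * 3 = b := by simpa [K, l, e, neg_add_eq_zero] using congrFun h 0
  have h2 : a = 0 := by simpa [K, l, e] using congrFun h 2
  omega

/- `J = −1 + 2π` with `π` the orthogonal projection onto `ℤK + ℤF` (Gram matrix
`[[4, −2], [−2, 0]]`), i.e. `J x = −x − (x·F) K − (2 x·F + x·K) F`. -/
lemma dot_jonquieres_mulVec_self (x : Fin 6 → ℤ) : dot (jonquieres *ᵥ x) x =
    -dot x x - 2 * dot x (l - e 0) * dot x K - 2 * dot x (l - e 0) ^ 2 := by
  rw [dot_K, dot_l_sub_e_zero, dot_eq, dot_eq, jonquieres_mulVec]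
  simp only [cons_val_zero, cons_val_one, cons_val]
  ring

lemma dot_l_sub_e_zero_eq_zero_or_one {v : Fin 6 → ℤ} (hvv : dot v v = -1)
    (hvK : dot v K = -1) : dot v (l - e 0) = 0 ∨ dot v (l - e 0) = 1 := by
  rw [dot_eq] at hvv
  rw [dot_K] at hvK
  rw [dot_l_sub_e_zero]
  -- `4 Σ vᵢ² − (Σ vᵢ)² = Σ_{i<j} (vᵢ − vⱼ)²` over `i, j ∈ {2, …, 5}`, with both sums
  -- eliminated through `hvv` and `hvK`
  have key : (2 * (v 0 + v 1) - 1) ^ 2 + (v 0 - v 1 - 1) ^ 2 + ((v 2 - v 3) ^ 2 + (v 2 - v 4) ^ 2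
      + (v 2 - v 5) ^ 2 + (v 3 - v 4) ^ 2 + (v 3 - v 5) ^ 2 + (v 4 - v 5) ^ 2) = 5 := by
    linear_combination (-4) * hvv + (v 2 + v 3 + v 4 + v 5 + 1 - 3 * v 0 - v 1) * hvK
  have hsq : (2 * (v 0 + v 1) - 1) ^ 2 ≤ 5 := by nlinarith
  have hbound : -2 ≤ 2 * (v 0 + v 1) - 1 ∧ 2 * (v 0 + v 1) - 1 ≤ 2 := by constructor <;> nlinarith
  omega

lemma dot_jonquieres_mulVec_self_of_dot_self_eq_neg_one {v : Fin 6 → ℤ} (hvv : dot v v = -1)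
    (hvK : dot v K = -1) : dot (jonquieres *ᵥ v) v = 1 := by
  rw [dot_jonquieres_mulVec_self, hvv, hvK]
  rcases dot_l_sub_e_zero_eq_zero_or_one hvv hvK with h | h <;> rw [h] <;> norm_num

lemma eq_toLin'_jonquieres (I : (Fin 6 → ℤ) →ₗ[ℤ] (Fin 6 → ℤ))
    (hl : I l = (3 : ℤ) • l - (2 : ℤ) • e 0 - e 1 - e 2 - e 3 - e 4)
    (he1 : I (e 0) = (2 : ℤ) • l - e 0 - e 1 - e 2 - e 3 - e 4)
    (hej : ∀ j : Fin 5, j ≠ 0 → I (e j) = l - e 0 - e j) :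
    I = toLin' jonquieres := by
  refine LinearMap.pi_ext' fun i => LinearMap.ext_ring ?_
  simp only [LinearMap.comp_apply, LinearMap.coe_single, toLin'_apply, mulVec_single_one]
  refine Fin.cases ?_ (fun j => ?_) i
  · rw [← l, hl]
    decide
  · rw [← e]
    by_cases hj : j = 0
    · subst hj
      rw [he1]
      decide
    · rw [hej j hj]
      revert j
      decide

theorem statement6 (I : (Fin 6 → ℤ) →ₗ[ℤ] (Fin 6 → ℤ))
    (hl : I l = (3 : ℤ) • l - (2 : ℤ) • e 0 - e 1 - e 2 - e 3 - e 4)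
    (he1 : I (e 0) = (2 : ℤ) • l - e 0 - e 1 - e 2 - e 3 - e 4)
    (hej : ∀ j : Fin 5, j ≠ 0 → I (e j) = l - e 0 - e j) :
    (∀ x, I (I x) = x) ∧
    (∀ x y, dot (I x) (I y) = dot x y) ∧
    I K = K ∧
    (∀ x, I x = x ↔ ∃ a b : ℤ, x = a • K + b • (l - e 0)) ∧
    Module.finrank ℤ ↥(LinearMap.ker (I - LinearMap.id)) = 2 ∧
    Module.finrank ℤ ↥(LinearMap.ker (I + LinearMap.id)) = 4 ∧
    (∀ v, dot v v = -1 ∧ dot v K = -1 → I v ≠ v ∧ dot (I v) v = 1) := by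
  obtain rfl := eq_toLin'_jonquieres I hl he1 hej
  refine ⟨fun x => ?_, dot_mulVec_mulVec jonquieres_transpose_mul_gram_mul,
    jonquieres_mulVec_K, jonquieres_mulVec_eq_self_iff, ?_, ?_, ?_⟩
  · simp [mulVec_mulVec, jonquieres_mul_self]
  · refine finrank_eq_card_of_mem_iff _ linearIndependent_K_l_sub_e_zero fun x => ?_
    rw [LinearMap.mem_ker, LinearMap.sub_apply, LinearMap.id_apply, sub_eq_zero, toLin'_apply,
      jonquieres_mulVec_eq_self_iff]
    simp [Fin.exists_fin_succ_pi, eq_comm]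
  · refine finrank_eq_card_of_mem_iff _ linearIndependent_antiInvariantBasis fun x => ?_
    simp [add_eq_zero_iff_eq_neg, jonquieres_mulVec_eq_neg_iff]
  · rintro v ⟨hvv, hvK⟩
    have hdot := dot_jonquieres_mulVec_self_of_dot_self_eq_neg_one hvv hvK
    exact ⟨fun hfix => by simp_all, hdot⟩

end Stmt6
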